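/- arXiv:1808.02760 — 3 statements merged into one kernel-verified Lean document; each statement's English description precedes it below -/
import Mathlib

section
/- For the ideal I of Λ = k[ℝ≥0] generated by {T^a : a > 0}, the multiplication map I ⊗_Λ I → I, x ⊗ y ↦ xy, is an isomorphism of Λ-modules. -/
open scoped NNReal TensorProduct

abbrev Lam (k : Type) [Field k] : Type := AddMonoidAlgebra k ℝ≥0

/-- The ideal of `Λ = k[ℝ≥0]` generated by the monomials `T^a` with `a > 0`. -/
noncomputable def posIdeal (k : Type) [Field k] : Ideal (Lam k) :=
  Ideal.span {f : Lam k | ∃ a : ℝ≥0, 0 < a ∧ f = AddMonoidAlgebra.single a 1}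

namespace PosIdealAux

variable {k : Type} [Field k]

lemma single_mem {a : ℝ≥0} (ha : 0 < a) :
    (AddMonoidAlgebra.single a 1 : Lam k) ∈ posIdeal k :=
  Ideal.subset_span ⟨a, ha, rfl⟩

lemma coeff_zero_eq_zero {f : Lam k} (hf : f ∈ posIdeal k) : f.coeff 0 = 0 := by
  induction hf using Submodule.span_induction with
  | mem x h => obtain ⟨a, ha, rfl⟩ := h; exact Finsupp.single_eq_of_ne' ha.ne'
  | zero => rfl
  | add x y hx hy hpx hpy => rw [AddMonoidAlgebra.coeff_add, Finsupp.add_apply, hpx, hpy, add_zero]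
  | smul r x hx hpx =>
    rw [smul_eq_mul]
    by_contra h
    have h0 : (0 : ℝ≥0) ∈ (r * x).coeff.support := Finsupp.mem_support_iff.2 h
    have h1 := AddMonoidAlgebra.support_coeff_mul_subset r x h0
    simp only [Finset.mem_add] at h1
    obtain ⟨a, ha, b, hb, hab⟩ := h1
    obtain ⟨rfl, rfl⟩ := add_eq_zero.1 hab
    exact (Finsupp.mem_support_iff.1 hb) hpx

lemma exists_div {f : Lam k} (hf : f ∈ posIdeal k) :
    ∃ c : ℝ≥0, 0 < c ∧ ∃ g : Lam k, f = AddMonoidAlgebra.single c 1 * g := by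
  by_cases h0 : f = 0
  · exact ⟨1, one_pos, 0, by simp [h0]⟩
  have hne : f.coeff.support.Nonempty :=
    Finsupp.support_nonempty_iff.2 (mt AddMonoidAlgebra.coeff_eq_zero.1 h0)
  set m := f.coeff.support.min' hne with hm
  have hmmem : m ∈ f.coeff.support := f.coeff.support.min'_mem hne
  have hmpos : 0 < m := pos_iff_ne_zero.2 fun h =>
    (Finsupp.mem_support_iff.1 hmmem) (h ▸ coeff_zero_eq_zero hf)
  have hmod : f.modOf m = 0 := by
    refine AddMonoidAlgebra.ext (Finsupp.ext fun g' => ?_)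
    by_cases hex : ∃ d, g' = m + d
    · rw [AddMonoidAlgebra.coeff_modOf_of_exists_add _ _ _ hex, AddMonoidAlgebra.coeff_zero,
        Finsupp.zero_apply]
    · rw [AddMonoidAlgebra.coeff_modOf_of_not_exists_add _ _ _ hex, AddMonoidAlgebra.coeff_zero,
        Finsupp.zero_apply]
      by_contra h
      have hg : g' ∈ f.coeff.support := Finsupp.mem_support_iff.2 h
      exact hex ⟨g' - m, (add_tsub_cancel_of_le (f.coeff.support.min'_le _ hg)).symm⟩
  obtain ⟨g, hg⟩ := AddMonoidAlgebra.of'_dvd_iff_modOf_eq_zero.2 hmod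
  exact ⟨m, hmpos, g, by rwa [AddMonoidAlgebra.of'_apply] at hg⟩

lemma single_dvd_single {c d : ℝ≥0} (h : c ≤ d) :
    (AddMonoidAlgebra.single c 1 : Lam k) ∣ AddMonoidAlgebra.single d 1 := by
  refine ⟨AddMonoidAlgebra.single (d - c) 1, ?_⟩
  rw [AddMonoidAlgebra.single_mul_single, mul_one, add_tsub_cancel_of_le h]

lemma exists_common_div (s : Finset (Lam k)) (hs : ∀ f ∈ s, f ∈ posIdeal k) :
    ∃ c : ℝ≥0, 0 < c ∧ ∀ f ∈ s, ∃ g : Lam k, f = AddMonoidAlgebra.single c 1 * g := by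
  classical
  induction s using Finset.induction_on with
  | empty => exact ⟨1, one_pos, fun f hf => absurd hf (Finset.notMem_empty f)⟩
  | @insert a s _ ih =>
    obtain ⟨c, hc, hcd⟩ := ih fun f hf => hs f (Finset.mem_insert_of_mem hf)
    obtain ⟨c', hc', g', hg'⟩ := exists_div (hs a (Finset.mem_insert_self a s))
    refine ⟨min c c', lt_min hc hc', fun f hf => ?_⟩
    have key : ∀ (d : ℝ≥0) (g : Lam k), min c c' ≤ d →
        f = AddMonoidAlgebra.single d 1 * g →
        ∃ g : Lam k, f = AddMonoidAlgebra.single (min c c') 1 * g := by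
      intro d g hled hfd
      obtain ⟨u, hu⟩ := single_dvd_single (k := k) hled
      exact ⟨u * g, by rw [hfd, hu, mul_assoc]⟩
    rcases Finset.mem_insert.1 hf with rfl | hf
    · exact key c' g' (min_le_right _ _) hg'
    · obtain ⟨g, hg⟩ := hcd f hf
      exact key c g (min_le_left _ _) hg

/-- Every element of `posIdeal` is a product of two elements of `posIdeal`. -/
lemma exists_mul {f : Lam k} (hf : f ∈ posIdeal k) :
    ∃ x y : Lam k, x ∈ posIdeal k ∧ y ∈ posIdeal k ∧ f = x * y := by
  obtain ⟨c, hc, g, hg⟩ := exists_div hf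
  refine ⟨AddMonoidAlgebra.single (c / 2) 1, AddMonoidAlgebra.single (c / 2) 1 * g,
    single_mem (by positivity), Ideal.mul_mem_right _ _ (single_mem (by positivity)), ?_⟩
  rw [← mul_assoc, AddMonoidAlgebra.single_mul_single, mul_one, add_halves, ← hg]

noncomputable def mulMap :
    (posIdeal k) →ₗ[Lam k] (posIdeal k) →ₗ[Lam k] (posIdeal k) where
  toFun x := (x : Lam k) • LinearMap.id
  map_add' x y := by simp [add_smul]
  map_smul' r x := by
    ext y
    simp [mul_smul]

noncomputable def mu : (posIdeal k ⊗[Lam k] posIdeal k) →ₗ[Lam k] posIdeal k :=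
  TensorProduct.lift mulMap

lemma mu_tmul (x y : posIdeal k) :
    mu (x ⊗ₜ[Lam k] y) = ⟨(x : Lam k) * (y : Lam k), (posIdeal k).mul_mem_left _ y.2⟩ := by
  apply Subtype.ext
  simp [mu, mulMap]

lemma mu_injective : Function.Injective (mu (k := k)) := by
  classical
  rw [injective_iff_map_eq_zero]
  intro z hz
  obtain ⟨S, rfl⟩ := TensorProduct.exists_finset z
  obtain ⟨c, hc, hdiv⟩ := exists_common_div (S.image fun p => ((p.1 : Lam k)))
    (by rintro f hf; obtain ⟨p, hp, rfl⟩ := Finset.mem_image.1 hf; exact p.1.2)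
  set tc : posIdeal k := ⟨AddMonoidAlgebra.single c 1, single_mem hc⟩ with htc
  choose g hg using fun p : { x // x ∈ S } =>
    hdiv _ (Finset.mem_image_of_mem _ p.2)
  have hsum : ∑ p ∈ S, (p.1 ⊗ₜ[Lam k] p.2 : posIdeal k ⊗[Lam k] posIdeal k)
      = tc ⊗ₜ[Lam k] ∑ p ∈ S.attach, g p • p.1.2 := by
    rw [TensorProduct.tmul_sum, ← Finset.sum_attach S fun p => (p.1 ⊗ₜ[Lam k] p.2)]
    refine Finset.sum_congr rfl fun p _ => ?_
    have h1 : p.1.1 = g p • tc := by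
      apply Subtype.ext
      simp only [htc, SetLike.val_smul, smul_eq_mul]
      rw [mul_comm]; exact hg p
    rw [h1, TensorProduct.smul_tmul]
  rw [hsum] at hz ⊢
  set w : posIdeal k := ∑ p ∈ S.attach, g p • p.1.2 with hw
  rw [mu_tmul] at hz
  have hz' : (AddMonoidAlgebra.single c 1 : Lam k) * (w : Lam k) = 0 :=
    congrArg Subtype.val hz
  have hw0 : (w : Lam k) = 0 := by
    rcases mul_eq_zero.1 hz' with h | h
    · exact absurd (AddMonoidAlgebra.single_eq_zero.1 h) one_ne_zero
    · exact h
  rw [show w = 0 from Subtype.ext hw0, TensorProduct.tmul_zero]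

lemma mu_surjective : Function.Surjective (mu (k := k)) := by
  rintro ⟨f, hf⟩
  obtain ⟨x, y, hx, hy, rfl⟩ := exists_mul hf
  exact ⟨(⟨x, hx⟩ : posIdeal k) ⊗ₜ[Lam k] ⟨y, hy⟩, by rw [mu_tmul]⟩

end PosIdealAux

theorem posIdeal_tensor_mul_iso (k : Type) [Field k] :
    ∃ e : (posIdeal k ⊗[Lam k] posIdeal k) ≃ₗ[Lam k] posIdeal k,
      ∀ x y : posIdeal k,
        e (x ⊗ₜ[Lam k] y) = ⟨(x : Lam k) * (y : Lam k), (posIdeal k).mul_mem_left _ y.2⟩ := by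
  exact ⟨LinearEquiv.ofBijective PosIdealAux.mu
    ⟨PosIdealAux.mu_injective, PosIdealAux.mu_surjective⟩, PosIdealAux.mu_tmul⟩
end

section
/- (Lemma on homogeneous elements.) Let V be an ℝ-graded Λ-module and s ∈ V a homogeneous element such that T^a·s ≠ 0 for every a ∈ ℝ≥0. Then the image s ⊗ 1 of s in V ⊗_Λ k is nonzero, where k is a Λ-module via the augmentation T^a ↦ 1. -/
open scoped NNReal TensorProduct
open scoped DirectSum

/-- The augmentation `ε : Λ → k`, sending every monomial `T^a` to `1`. -/
noncomputable def aug (k : Type) [Field k] : Lam k →+* k :=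
  ((AddMonoidAlgebra.lift k k ℝ≥0) 1).toRingHom

/-- `k` is a `Λ`-module via the augmentation `ε`. -/
noncomputable instance (k : Type) [Field k] : Module (Lam k) k :=
  Module.compHom k (aug k)

/-- An `ℝ`-grading on a `Λ`-module `V`: a direct sum decomposition `V = ⊕_{a ∈ ℝ} Gr^a V`
into `k`-subspaces such that `T^b · Gr^a V ⊆ Gr^{a+b} V`. -/
structure GradedMod (k : Type) [Field k] (V : Type) [AddCommGroup V]
    [Module (Lam k) V] [Module k V] [IsScalarTower k (Lam k) V] where
  gr : ℝ → Submodule k V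
  internal : DirectSum.IsInternal gr
  smul_mem : ∀ (a : ℝ) (b : ℝ≥0) (v : V), v ∈ gr a →
    (AddMonoidAlgebra.single b (1 : k) : Lam k) • v ∈ gr (a + (b : ℝ))

section Aux
variable {k : Type} [Field k] {V : Type} [AddCommGroup V]
    [Module (Lam k) V] [Module k V] [IsScalarTower k (Lam k) V]

lemma lam_smul_comm (x : Lam k) (a : k) (v : V) : x • a • v = a • x • v := by
  conv_lhs => rw [← algebraMap_smul (Lam k) a v]
  conv_rhs => rw [← algebraMap_smul (Lam k) a (x • v)]
  rw [smul_smul, smul_smul, mul_comm]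

lemma aug_single (a : ℝ≥0) (c : k) : aug k (AddMonoidAlgebra.single a c) = c := by
  simp [aug, AddMonoidAlgebra.lift_single]

noncomputable def GradedMod.trans (G : GradedMod k V) (c c' : ℝ) (h : c ≤ c') :
    G.gr c →ₗ[k] G.gr c' where
  toFun w := ⟨(AddMonoidAlgebra.single (Real.toNNReal (c' - c)) (1 : k) : Lam k) • (w : V), by
    have := G.smul_mem c (Real.toNNReal (c' - c)) w w.2
    rwa [Real.coe_toNNReal _ (by linarith), add_sub_cancel] at this⟩
  map_add' x y := by ext; simp [smul_add]
  map_smul' a x := by ext; simp [lam_smul_comm]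

lemma GradedMod.trans_directed (G : GradedMod k V) :
    DirectedSystem (fun c => G.gr c) (fun c c' h => G.trans c c' h) := by
  constructor
  · intro i x
    ext
    simp only [GradedMod.trans, LinearMap.coe_mk, AddHom.coe_mk]
    rw [sub_self, Real.toNNReal_zero]
    show ((AddMonoidAlgebra.single 0 (1 : k) : Lam k) • (x : V)) = x
    rw [← AddMonoidAlgebra.one_def, one_smul]
  · intro i j l hij hjl x
    ext
    simp only [GradedMod.trans, LinearMap.coe_mk, AddHom.coe_mk]
    rw [smul_smul, AddMonoidAlgebra.single_mul_single, one_mul]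
    congr 2
    rw [← Real.toNNReal_add (by linarith) (by linarith)]
    congr 1
    ring
end Aux

theorem homogeneous_tensor_ne_zero (k : Type) [Field k] (V : Type) [AddCommGroup V]
    [Module (Lam k) V] [Module k V] [IsScalarTower k (Lam k) V]
    (G : GradedMod k V) (a : ℝ) (s : V) (hs : s ∈ G.gr a)
    (h : ∀ b : ℝ≥0, (AddMonoidAlgebra.single b (1 : k) : Lam k) • s ≠ 0) :
    (s ⊗ₜ[Lam k] (1 : k) : V ⊗[Lam k] k) ≠ 0 := by
  classical
  haveI := G.trans_directed
  set E := Module.DirectLimit (R := k) (fun c => G.gr c) (fun c c' h => G.trans c c' h) with hE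
  set ofE : ∀ c : ℝ, G.gr c →ₗ[k] E :=
    fun c => Module.DirectLimit.of k ℝ (fun c => G.gr c) (fun c c' h => G.trans c c' h) c with hofE
  -- the decomposition equivalence
  set e : (⨁ c : ℝ, G.gr c) ≃ₗ[k] V :=
    LinearEquiv.ofBijective (DirectSum.coeLinearMap G.gr) G.internal with he
  set φ : V →ₗ[k] E :=
    (DirectSum.toModule k ℝ E ofE) ∘ₗ (e.symm : V →ₗ[k] (⨁ c : ℝ, G.gr c)) with hφ
  have phi_homog : ∀ (c : ℝ) (v : V) (hv : v ∈ G.gr c), φ v = ofE c ⟨v, hv⟩ := by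
    intro c v hv
    have h1 : e (DirectSum.lof k ℝ (fun c => G.gr c) c ⟨v, hv⟩) = v := by
      show DirectSum.coeLinearMap G.gr (DirectSum.lof k ℝ (fun c => G.gr c) c ⟨v, hv⟩) = v
      rw [DirectSum.lof_eq_of, DirectSum.coeLinearMap_of]
    have h2 : e.symm v = DirectSum.lof k ℝ (fun c => G.gr c) c ⟨v, hv⟩ :=
      e.symm_apply_eq.mpr h1.symm
    simp [hφ, h2, DirectSum.toModule_lof]
  have phi_T : ∀ (b : ℝ≥0) (v : V),
      φ ((AddMonoidAlgebra.single b (1 : k) : Lam k) • v) = φ v := by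
    intro b v
    -- reduce to homogeneous v
    have : ∀ x : ⨁ c : ℝ, G.gr c,
        φ ((AddMonoidAlgebra.single b (1 : k) : Lam k) • (DirectSum.coeLinearMap G.gr x))
          = φ (DirectSum.coeLinearMap G.gr x) := by
      intro x
      induction x using DirectSum.induction_on with
      | zero => simp
      | of c w =>
        rw [DirectSum.coeLinearMap_of]
        have hmem := G.smul_mem c b w w.2
        rw [phi_homog c w w.2, phi_homog (c + (b : ℝ)) _ hmem]
        have hle : c ≤ c + (b : ℝ) := le_add_of_nonneg_right b.coe_nonneg
        have : (⟨(AddMonoidAlgebra.single b (1 : k) : Lam k) • (w : V), hmem⟩ :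
            G.gr (c + (b : ℝ))) = G.trans c (c + (b : ℝ)) hle w := by
          ext
          simp only [GradedMod.trans, LinearMap.coe_mk, AddHom.coe_mk]
          congr 2
          rw [add_sub_cancel_left, Real.toNNReal_coe]
        rw [this]
        exact Module.DirectLimit.of_f
      | add x y hx hy =>
        rw [map_add, smul_add, map_add, map_add, hx, hy]
    obtain ⟨x, rfl⟩ : ∃ x, DirectSum.coeLinearMap G.gr x = v := G.internal.2 v
    exact this x
  -- φ is Λ-linear where Λ acts on E through aug
  have phi_lam : ∀ (x : Lam k) (v : V), φ (x • v) = aug k x • φ v := by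
    intro x v
    induction x using AddMonoidAlgebra.induction with
    | zero => simp
    | single_add b c f hb hc hf =>
      have hsingle : φ ((AddMonoidAlgebra.single b c : Lam k) • v)
          = aug k (AddMonoidAlgebra.single b c) • φ v := by
        have hrw : (AddMonoidAlgebra.single b c : Lam k)
            = c • (AddMonoidAlgebra.single b 1 : Lam k) := by
          rw [AddMonoidAlgebra.smul_single, smul_eq_mul, mul_one]
        rw [hrw, smul_assoc, map_smul, phi_T, ← hrw, aug_single]
      rw [add_smul, map_add, map_add, add_smul, hf, hsingle]
  -- make E a Λ-module via the augmentation
  letI : Module (Lam k) E := Module.compHom E (aug k)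
  have smul_def : ∀ (x : Lam k) (m : E), x • m = aug k x • m := fun _ _ => rfl
  -- the bilinear map (v, x) ↦ x • φ v
  set B : V →ₗ[Lam k] k →ₗ[Lam k] E :=
    { toFun := fun v =>
        { toFun := fun x => x • φ v
          map_add' := fun x y => add_smul x y (φ v)
          map_smul' := fun lam x => by
            show (aug k lam * x) • φ v = lam • (x • φ v)
            rw [smul_def, mul_smul] }
      map_add' := fun v w => by
        ext x
        simp only [map_add, smul_add, LinearMap.coe_mk, AddHom.coe_mk, LinearMap.add_apply]
      map_smul' := fun lam v => by
        ext x
        show x • φ (lam • v) = lam • (x • φ v)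
        rw [phi_lam, smul_def, smul_comm] } with hB
  set ψ : (V ⊗[Lam k] k) →ₗ[Lam k] E := TensorProduct.lift B with hψ
  intro hzero
  have hφs : φ s = 0 := by
    have h1 : ψ (s ⊗ₜ[Lam k] (1 : k)) = φ s := by
      show (1 : k) • φ s = φ s
      rw [one_smul]
    rw [hzero, map_zero] at h1
    exact h1.symm
  rw [phi_homog a s hs] at hφs
  obtain ⟨j, hij, hj⟩ := Module.DirectLimit.of.zero_exact hφs
  have : (AddMonoidAlgebra.single (Real.toNNReal (j - a)) (1 : k) : Lam k) • s = 0 := by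
    have := congrArg Subtype.val hj
    exact this
  exact h _ this
end

section
/- (Exactness of forgetting the grading.) Let f: V → W be an injective degree-0 homomorphism of ℝ-graded Λ-modules (i.e. f is Λ-linear and f(Gr^a V) ⊆ Gr^a W for all a). Then the induced map f ⊗ id: V ⊗_Λ k → W ⊗_Λ k is injective, where k is a Λ-module via the augmentation T^a ↦ 1. Consequently, the functor (−) ⊗_Λ k is exact on the category of ℝ-graded Λ-modules with degree-0 morphisms. -/
open scoped NNReal TensorProduct

namespace GradedAux

set_option maxHeartbeats 1000000
set_option synthInstance.maxHeartbeats 200000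
set_option linter.unusedSectionVars false

open AddMonoidAlgebra DirectSum
open scoped Classical

variable {k : Type} [Field k]

lemma aug_single (b : ℝ≥0) (x : k) : aug k (AddMonoidAlgebra.single b x) = x := by
  simp [aug]

lemma lam_smul (r : Lam k) (x : k) : r • x = aug k r * x := rfl

lemma algMap_eq (x : k) : algebraMap k (Lam k) x = AddMonoidAlgebra.single 0 x := by
  simp [AddMonoidAlgebra.coe_algebraMap]

lemma aug_algMap (x : k) : aug k (algebraMap k (Lam k) x) = x := by
  rw [algMap_eq, aug_single]

variable {V : Type} [AddCommGroup V] [Module (Lam k) V] [Module k V]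
  [IsScalarTower k (Lam k) V]

/-- multiplication by `T^b` as a `k`-linear map. -/
noncomputable def mulT (b : ℝ≥0) : V →ₗ[k] V where
  toFun v := (AddMonoidAlgebra.single b (1 : k) : Lam k) • v
  map_add' u v := smul_add ((AddMonoidAlgebra.single b (1 : k) : Lam k)) u v
  map_smul' x v := by
    simp only [RingHom.id_apply]
    rw [← algebraMap_smul (Lam k) x v, ← algebraMap_smul (Lam k) x
      ((AddMonoidAlgebra.single b (1 : k) : Lam k) • v), ← mul_smul, ← mul_smul, mul_comm]

@[simp] lemma mulT_apply (b : ℝ≥0) (v : V) :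
    mulT (k := k) b v = (AddMonoidAlgebra.single b (1 : k) : Lam k) • v := rfl

/-- The span of the elements `T^b • w - w`; this is the image of the augmentation
ideal under the action. -/
noncomputable def NN : Submodule (Lam k) V :=
  Submodule.span (Lam k)
    {u | ∃ (b : ℝ≥0) (w : V), u = (AddMonoidAlgebra.single b (1 : k) : Lam k) • w - w}

variable (G : GradedMod k V)

/-- The decomposition isomorphism. -/
noncomputable def dec : V ≃ₗ[k] ⨁ a : ℝ, G.gr a :=
  (LinearEquiv.ofBijective (DirectSum.coeLinearMap G.gr) G.internal).symm

lemma dec_symm_apply (x : ⨁ a : ℝ, G.gr a) :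
    (dec G).symm x = DirectSum.coeLinearMap G.gr x := rfl

lemma dec_coe {a : ℝ} (u : G.gr a) :
    dec G (u : V) = DirectSum.lof k ℝ (fun a => G.gr a) a u := by
  apply (dec G).symm.injective
  rw [LinearEquiv.symm_apply_apply, dec_symm_apply, DirectSum.lof_eq_of,
    DirectSum.coeLinearMap_of]

/-- induction principle: to prove a statement closed under `0` and `+`, it suffices
to prove it for homogeneous elements. -/
lemma indn {P : V → Prop} (h0 : P 0) (hadd : ∀ u v, P u → P v → P (u + v))
    (hhom : ∀ (a : ℝ) (u : G.gr a), P (u : V)) : ∀ v, P v := by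
  intro v
  rw [← (dec G).symm_apply_apply v]
  induction dec G v using DirectSum.induction_on with
  | zero => simpa using h0
  | of a u =>
      rw [dec_symm_apply, DirectSum.coeLinearMap_of]
      exact hhom a u
  | add x y hx hy => rw [map_add]; exact hadd _ _ hx hy

/-- The shift operator `σ_c`, sending a homogeneous `u` of degree `a` to
`T^{(c-a)⁺} • u`. -/
noncomputable def sig (c : ℝ) : V →ₗ[k] V :=
  (DirectSum.toModule k ℝ V fun a =>
    (mulT (Real.toNNReal (c - a))).comp (G.gr a).subtype).comp (dec G).toLinearMap

lemma sig_of_mem (c : ℝ) {a : ℝ} {w : V} (hw : w ∈ G.gr a) :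
    sig G c w =
      (AddMonoidAlgebra.single (Real.toNNReal (c - a)) (1 : k) : Lam k) • w := by
  show sig G c ((⟨w, hw⟩ : G.gr a) : V) = _
  rw [sig, LinearMap.comp_apply, LinearEquiv.coe_toLinearMap, dec_coe,
    DirectSum.toModule_lof]
  rfl

/-- key commutation: `σ_c (T^b x • v) = x • T^b • σ_{c-b} v`. -/
lemma sig_single_smul (c : ℝ) (b : ℝ≥0) (x : k) (v : V) :
    sig G c ((AddMonoidAlgebra.single b x : Lam k) • v) =
      x • ((AddMonoidAlgebra.single b (1 : k) : Lam k) • sig G (c - b) v) := by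
  induction v using indn G with
  | h0 => simp
  | hadd u v hu hv => rw [smul_add, map_add, map_add, smul_add, smul_add, hu, hv]
  | hhom a u =>
      have hm := G.smul_mem a b (u : V) u.2
      have h1 : (AddMonoidAlgebra.single b x : Lam k) • (u : V)
          = x • ((AddMonoidAlgebra.single b (1 : k) : Lam k) • (u : V)) := by
        rw [← smul_assoc, AddMonoidAlgebra.smul_single', mul_one]
      rw [h1, map_smul, sig_of_mem G c hm, sig_of_mem G (c - (b : ℝ)) u.2]
      congr 1
      rw [← mul_smul, ← mul_smul, AddMonoidAlgebra.single_mul_single,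
        AddMonoidAlgebra.single_mul_single, one_mul]
      have harg : c - (a + (b : ℝ)) = c - (b : ℝ) - a := by ring
      rw [harg, add_comm (Real.toNNReal (c - (b : ℝ) - a)) b]

/-- expansion of `v` as the sum of its homogeneous components. -/
lemma sum_components (v : V) :
    v = ∑ a ∈ (dec G v).support, ((dec G v a : V)) := by
  conv_lhs => rw [← (dec G).symm_apply_apply v,
    ← DirectSum.sum_support_of (dec G v)]
  rw [map_sum]
  refine Finset.sum_congr rfl fun a _ => ?_
  rw [dec_symm_apply, DirectSum.coeLinearMap_of]

/-- shifting up: if all the degrees of `v` are `≤ c`, then `T^b • σ_c v = σ_{c+b} v`. -/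
lemma sig_shift (c : ℝ) (b : ℝ≥0) (v : V)
    (hc : ∀ a ∈ (dec G v).support, a ≤ c) :
    (AddMonoidAlgebra.single b (1 : k) : Lam k) • sig G c v = sig G (c + b) v := by
  conv_lhs => rw [sum_components G v]
  conv_rhs => rw [sum_components G v]
  rw [map_sum, map_sum, Finset.smul_sum]
  refine Finset.sum_congr rfl fun a ha => ?_
  have hac : a ≤ c := hc a ha
  have hb : (0 : ℝ) ≤ (b : ℝ) := b.coe_nonneg
  rw [sig_of_mem G c (dec G v a).2, sig_of_mem G (c + (b : ℝ)) (dec G v a).2,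
    ← mul_smul, AddMonoidAlgebra.single_mul_single, one_mul]
  have heq : b + Real.toNNReal (c - a) = Real.toNNReal (c + (b : ℝ) - a) := by
    apply NNReal.coe_injective
    rw [NNReal.coe_add, Real.coe_toNNReal _ (by linarith), Real.coe_toNNReal _ (by linarith)]
    ring
  rw [heq]

/-- the degrees appearing in `T^b x • v` are bounded by those of `v` plus `b`. -/
lemma supp_smul_bound (b : ℝ≥0) (x : k) (v : V) {d : ℝ}
    (hd : ∀ a ∈ (dec G v).support, a ≤ d) :
    ∀ a' ∈ (dec G ((AddMonoidAlgebra.single b x : Lam k) • v)).support, a' ≤ d + b := by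
  intro a' ha'
  by_contra hgt
  push_neg at hgt
  apply DFinsupp.mem_support_iff.mp ha'
  have hv : (AddMonoidAlgebra.single b x : Lam k) • v
      = ∑ a ∈ (dec G v).support,
          (x • ((AddMonoidAlgebra.single b (1 : k) : Lam k) • ((dec G v a : V)))) := by
    conv_lhs => rw [sum_components G v]
    rw [Finset.smul_sum]
    refine Finset.sum_congr rfl fun a _ => ?_
    rw [← smul_assoc, AddMonoidAlgebra.smul_single', mul_one]
  rw [hv, map_sum, DFinsupp.finset_sum_apply]
  refine Finset.sum_eq_zero fun a ha => ?_
  have hm : x • ((AddMonoidAlgebra.single b (1 : k) : Lam k) • ((dec G v a : V)))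
      ∈ G.gr (a + (b : ℝ)) :=
    Submodule.smul_mem _ x (G.smul_mem a b _ (dec G v a).2)
  have hdec : dec G (x • ((AddMonoidAlgebra.single b (1 : k) : Lam k) • ((dec G v a : V))))
      = DirectSum.lof k ℝ (fun a => G.gr a) (a + (b : ℝ)) ⟨_, hm⟩ :=
    dec_coe G (⟨_, hm⟩ : G.gr (a + (b : ℝ)))
  rw [hdec, DirectSum.lof_eq_of]
  exact DirectSum.of_eq_of_ne _ _ _
    (by intro h; rw [h] at hgt; linarith [hd a ha])

/-- The predicate: the shifts `σ_c v` vanish for all large `c`. -/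
def Good (v : V) : Prop :=
  ∃ c₀ : ℝ, (∀ a ∈ (dec G v).support, a ≤ c₀) ∧ ∀ c : ℝ, c₀ ≤ c → sig G c v = 0

lemma good_zero : Good G (0 : V) :=
  ⟨0, by simp, fun c _ => by simp⟩

lemma good_add {u v : V} (hu : Good G u) (hv : Good G v) : Good G (u + v) := by
  obtain ⟨c₁, hb₁, hz₁⟩ := hu
  obtain ⟨c₂, hb₂, hz₂⟩ := hv
  refine ⟨max c₁ c₂, fun a ha => ?_, fun c hc => ?_⟩
  · rw [map_add] at ha
    rcases Finset.mem_union.mp (DFinsupp.support_add ha) with h | h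
    · exact le_trans (hb₁ a h) (le_max_left _ _)
    · exact le_trans (hb₂ a h) (le_max_right _ _)
  · rw [map_add, hz₁ c (le_trans (le_max_left _ _) hc),
      hz₂ c (le_trans (le_max_right _ _) hc), add_zero]

lemma good_ksmul (x : k) {v : V} (hv : Good G v) : Good G (x • v) := by
  obtain ⟨c₀, hb, hz⟩ := hv
  refine ⟨c₀, fun a ha => hb a ?_, fun c hc => by rw [map_smul, hz c hc, smul_zero]⟩
  rw [map_smul] at ha
  rw [DFinsupp.mem_support_iff] at ha ⊢
  intro h0
  apply ha
  rw [DFinsupp.smul_apply, h0, smul_zero]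

lemma good_single_smul (b : ℝ≥0) (x : k) {v : V} (hv : Good G v) :
    Good G ((AddMonoidAlgebra.single b x : Lam k) • v) := by
  obtain ⟨c₀, hb, hz⟩ := hv
  refine ⟨c₀ + b, supp_smul_bound G b x v hb, fun c hc => ?_⟩
  rw [sig_single_smul, hz (c - b) (by linarith), smul_zero, smul_zero]

lemma good_smul (r : Lam k) {v : V} (hv : Good G v) : Good G (r • v) := by
  induction r using AddMonoidAlgebra.induction_on with
  | of g =>
      rw [AddMonoidAlgebra.of_apply]
      exact good_single_smul G _ 1 hv
  | add f g hf hg => rw [add_smul]; exact good_add G hf hg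
  | smul x f hf => rw [smul_assoc]; exact good_ksmul G x hf

lemma good_gen (b : ℝ≥0) (w : V) :
    Good G ((AddMonoidAlgebra.single b (1 : k) : Lam k) • w - w) := by
  obtain ⟨d, hd⟩ := Finset.exists_le ((dec G w).support)
  have hb : (0 : ℝ) ≤ (b : ℝ) := b.coe_nonneg
  refine ⟨d + b, fun a ha => ?_, fun c hc => ?_⟩
  · rw [sub_eq_add_neg, map_add] at ha
    rcases Finset.mem_union.mp (DFinsupp.support_add ha) with h | h
    · exact supp_smul_bound G b 1 w hd a h
    · rw [map_neg, DFinsupp.support_neg] at h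
      linarith [hd a h]
  · have hcb : d ≤ c - b := by linarith
    rw [map_sub]
    have h1 : sig G c ((AddMonoidAlgebra.single b (1 : k) : Lam k) • w)
        = (AddMonoidAlgebra.single b (1 : k) : Lam k) • sig G (c - b) w := by
      rw [sig_single_smul, one_smul]
    rw [h1, sig_shift G (c - b) b w (fun a ha => le_trans (hd a ha) hcb),
      sub_add_cancel, sub_self]

lemma nn_good {v : V} (hv : v ∈ (NN : Submodule (Lam k) V)) : Good G v := by
  induction hv using Submodule.span_induction with
  | mem u hu => obtain ⟨b, w, rfl⟩ := hu; exact good_gen G b w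
  | zero => exact good_zero G
  | add u v _ _ hu hv => exact good_add G hu hv
  | smul r u _ hu => exact good_smul G r hu

lemma keyN (r : Lam k) (v : V) :
    r • v - (algebraMap k (Lam k) (aug k r)) • v ∈ (NN : Submodule (Lam k) V) := by
  induction r using AddMonoidAlgebra.induction_on with
  | of g =>
      rw [AddMonoidAlgebra.of_apply, aug_single, map_one, one_smul]
      exact Submodule.subset_span ⟨_, v, rfl⟩
  | add f g hf hg =>
      have h : (f + g) • v - (algebraMap k (Lam k) (aug k (f + g))) • v
          = (f • v - (algebraMap k (Lam k) (aug k f)) • v)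
            + (g • v - (algebraMap k (Lam k) (aug k g)) • v) := by
        rw [add_smul, map_add, map_add, add_smul]; abel
      rw [h]
      exact Submodule.add_mem _ hf hg
  | smul x f hf =>
      have h : (x • f) • v - (algebraMap k (Lam k) (aug k (x • f))) • v
          = (algebraMap k (Lam k) x) • (f • v - (algebraMap k (Lam k) (aug k f)) • v) := by
        rw [Algebra.smul_def, map_mul, aug_algMap, map_mul, mul_smul, mul_smul, smul_sub]
      rw [h]
      exact Submodule.smul_mem _ _ hf

/-- The map `V ⊗ k → V / NN` sending `v ⊗ x` to `x̃ • [v]`. -/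
noncomputable def qmap : (V ⊗[Lam k] k) →ₗ[Lam k] (V ⧸ (NN : Submodule (Lam k) V)) :=
  TensorProduct.lift (LinearMap.mk₂ (Lam k)
    (fun v x => (algebraMap k (Lam k) x) •
      (Submodule.Quotient.mk (p := (NN : Submodule (Lam k) V)) v))
    (fun v₁ v₂ x => by rw [Submodule.Quotient.mk_add, smul_add])
    (fun r v x => by
      rw [Submodule.Quotient.mk_smul, ← mul_smul, ← mul_smul, mul_comm])
    (fun v x₁ x₂ => by rw [map_add, add_smul])
    (fun r v x => by
      have key : (algebraMap k (Lam k) (aug k r)) •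
            (Submodule.Quotient.mk (p := (NN : Submodule (Lam k) V)) v)
          = r • Submodule.Quotient.mk (p := (NN : Submodule (Lam k) V)) v := by
        rw [← Submodule.Quotient.mk_smul, ← Submodule.Quotient.mk_smul,
          Submodule.Quotient.eq, ← neg_sub]
        exact Submodule.neg_mem _ (keyN r v)
      rw [lam_smul, map_mul, mul_comm, mul_smul, key, ← mul_smul, ← mul_smul, mul_comm]))

lemma qmap_tmul (v : V) :
    qmap (v ⊗ₜ[Lam k] (1 : k)) = Submodule.Quotient.mk (p := (NN : Submodule (Lam k) V)) v := by
  rw [qmap, TensorProduct.lift.tmul, LinearMap.mk₂_apply, map_one, one_smul]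

/-- Every element of `V ⊗ k` is a pure tensor `v ⊗ 1`. -/
lemma exists_tmul (t : V ⊗[Lam k] k) : ∃ v : V, t = v ⊗ₜ[Lam k] (1 : k) := by
  induction t using TensorProduct.induction_on with
  | zero => exact ⟨0, by rw [TensorProduct.zero_tmul]⟩
  | tmul v x =>
      refine ⟨(algebraMap k (Lam k) x) • v, ?_⟩
      rw [TensorProduct.smul_tmul]
      congr 1
      rw [lam_smul, aug_algMap, mul_one]
  | add s t hs ht =>
      obtain ⟨u, rfl⟩ := hs
      obtain ⟨w, rfl⟩ := ht
      exact ⟨u + w, by rw [TensorProduct.add_tmul]⟩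

lemma sig_tmul (c : ℝ) (v : V) :
    (sig G c v) ⊗ₜ[Lam k] (1 : k) = v ⊗ₜ[Lam k] (1 : k) := by
  induction v using indn G with
  | h0 => simp
  | hadd u v hu hv => rw [map_add, TensorProduct.add_tmul, hu, hv, TensorProduct.add_tmul]
  | hhom a u =>
      rw [sig_of_mem G c u.2, TensorProduct.smul_tmul]
      congr 1
      rw [lam_smul, aug_single, mul_one]

end GradedAux

open GradedAux in
theorem degree_zero_injective_tensor_injective (k : Type) [Field k]
    (V W : Type) [AddCommGroup V] [AddCommGroup W]
    [Module (Lam k) V] [Module k V] [IsScalarTower k (Lam k) V]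
    [Module (Lam k) W] [Module k W] [IsScalarTower k (Lam k) W]
    (GV : GradedMod k V) (GW : GradedMod k W)
    (f : V →ₗ[Lam k] W) (hinj : Function.Injective f)
    (hdeg : ∀ (a : ℝ) (v : V), v ∈ GV.gr a → f v ∈ GW.gr a) :
    Function.Injective (LinearMap.rTensor k f) := by
  have sig_comm : ∀ (c : ℝ) (v : V), sig GW c (f v) = f (sig GV c v) := by
    intro c
    refine indn GV ?_ ?_ ?_
    · simp
    · intro u v hu hv; simp only [map_add, hu, hv]
    · intro a u
      rw [sig_of_mem GW c (hdeg a u u.2), sig_of_mem GV c u.2, map_smul]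
  rw [← LinearMap.ker_eq_bot, Submodule.eq_bot_iff]
  intro t ht
  rw [LinearMap.mem_ker] at ht
  obtain ⟨v, rfl⟩ := exists_tmul t
  rw [LinearMap.rTensor_tmul] at ht
  have h2 : Submodule.Quotient.mk (p := (NN : Submodule (Lam k) W)) (f v) = 0 := by
    rw [← qmap_tmul (f v), ht, map_zero]
  have h3 : f v ∈ (NN : Submodule (Lam k) W) := (Submodule.Quotient.mk_eq_zero _).mp h2
  obtain ⟨c₀, _, hz⟩ := nn_good GW h3
  have h4 : sig GV c₀ v = 0 := by
    apply hinj
    rw [← sig_comm, hz c₀ le_rfl, map_zero]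
  rw [← sig_tmul GV c₀ v, h4, TensorProduct.zero_tmul]
end
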